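/- arXiv:2012.03686 — 2 statements merged into one kernel-verified Lean document; each statement's English description precedes it below -/
import Mathlib

section
/- If G is a P_t-free graph, then the treedepth of G is at most (tw(G)+1)^{t−1}, where tw(G) is the treewidth of G. -/
/-! Root a tree decomposition of width `w` and order the vertices so that a vertex comes before
every vertex whose highest bag is deeper. Every vertex strongly reachable from `v` (by a walk
staying above `v` until its last step) lies in the highest bag of `v`. If `u` is weakly reachable
from `v`, a shortest witnessing walk is an induced path, so in a `P_t`-free graph it has fewer
than `t` vertices, and its successive minima form a chain of at most `t - 2` strong-reachability
steps from `v` to `u`. Hence `v` weakly reaches at most `(w + 1) ^ (t - 2)` vertices, and weak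
reachability is the ancestor relation of an elimination forest. -/

/-- `G` contains an induced copy of `H`. -/
def HasInducedCopy {W V : Type*} (H : SimpleGraph W) (G : SimpleGraph V) : Prop :=
  ∃ f : W ↪ V, ∀ a b : W, G.Adj (f a) (f b) ↔ H.Adj a b

/-- `G` has a tree decomposition of width at most `w`: a tree `T` with bags of
size at most `w + 1` covering all vertices and edges, such that for every
vertex the set of bags containing it induces a connected subtree. -/
def TreewidthLE {V : Type} (G : SimpleGraph V) (w : ℕ) : Prop :=
  ∃ (ι : Type) (T : SimpleGraph ι) (bag : ι → Finset V),
    T.IsTree ∧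
    (∀ v : V, ∃ i, v ∈ bag i) ∧
    (∀ u v : V, G.Adj u v → ∃ i, u ∈ bag i ∧ v ∈ bag i) ∧
    (∀ v : V, (T.induce {i | v ∈ bag i}).Connected) ∧
    (∀ i, (bag i).card ≤ w + 1)

open scoped Classical in
/-- `G` has treedepth at most `k`: there is a forest order on `V` (a partial
order in which the set of ancestors of any vertex is a chain) such that every
edge of `G` joins comparable vertices and every vertex has at most `k`
ancestors (itself included).  Such an order is exactly the ancestor relation of
an elimination forest of height at most `k`. -/
def TreedepthLE {V : Type} [Fintype V] (G : SimpleGraph V) (k : ℕ) : Prop :=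
  ∃ le : V → V → Prop,
    (∀ v, le v v) ∧
    (∀ u v, le u v → le v u → u = v) ∧
    (∀ u v w, le u v → le v w → le u w) ∧
    (∀ u v, G.Adj u v → le u v ∨ le v u) ∧
    (∀ v u w, le u v → le w v → le u w ∨ le w u) ∧
    (∀ v, (Finset.univ.filter (fun u => le u v)).card ≤ k)

open Finset SimpleGraph

namespace Finset

variable {V : Type*} [DecidableEq V] {F : V → Finset V}

lemma iterate_biUnion_subset_iterate_biUnion (hF : ∀ x, x ∈ F x) {m n : ℕ} (hmn : m ≤ n)
    (s : Finset V) : (Finset.biUnion · F)^[m] s ⊆ (Finset.biUnion · F)^[n] s :=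
  Function.monotone_iterate_of_id_le (fun _ x hx => mem_biUnion.2 ⟨x, hx, hF x⟩) hmn s

lemma card_iterate_biUnion_le {c : ℕ} (hF : ∀ x, #(F x) ≤ c) (s : Finset V)
    (n : ℕ) : #((Finset.biUnion · F)^[n] s) ≤ #s * c ^ n := by
  induction n with
  | zero => simp
  | succ n ih =>
    rw [Function.iterate_succ_apply', pow_succ, ← mul_assoc]
    exact (card_biUnion_le_card_mul _ _ _ fun x _ => hF x).trans (Nat.mul_le_mul_right _ ih)

end Finset

namespace SimpleGraph

variable {V W : Type*} {G : SimpleGraph V} {u v : V}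

lemma hasInducedCopy_iff_isIndContained {H : SimpleGraph W} :
    HasInducedCopy H G ↔ H ⊴ G :=
  ⟨fun ⟨f, hf⟩ => ⟨⟨f, hf _ _⟩⟩, fun ⟨f⟩ => ⟨f.toEmbedding, fun _ _ => f.map_rel_iff⟩⟩

lemma pathGraph_isIndContained_pathGraph {m n : ℕ} (h : m ≤ n) : pathGraph m ⊴ pathGraph n :=
  ⟨⟨Fin.castLEEmb h, by simp [pathGraph_adj]⟩⟩

namespace Walk

lemma not_adj_getVert_of_length_eq_dist (p : G.Walk u v) (hp : p.length = G.dist u v)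
    {i j : ℕ} (hij : i + 1 < j) (hj : j ≤ p.length) : ¬ G.Adj (p.getVert i) (p.getVert j) := by
  intro h
  have := G.dist_le ((p.take i).append (.cons h (p.drop j)))
  simp only [length_append, take_length, length_cons, drop_length] at this
  omega

lemma pathGraph_isIndContained_of_length_eq_dist (p : G.Walk u v)
    (hp : p.length = G.dist u v) : pathGraph (p.length + 1) ⊴ G := by
  have hinj : Function.Injective fun i : Fin (p.length + 1) => p.getVert i := fun i j h =>
    Fin.ext <| (p.isPath_of_length_eq_dist hp).getVert_injOn (Nat.lt_succ_iff.1 i.2)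
      (Nat.lt_succ_iff.1 j.2) h
  refine ⟨⟨⟨_, hinj⟩, fun {i j} => ?_⟩⟩
  simp only [Function.Embedding.coeFn_mk, pathGraph_adj]
  constructor
  · intro h
    rcases lt_trichotomy (i : ℕ) j with hij | hij | hij
    · by_contra hne
      exact p.not_adj_getVert_of_length_eq_dist hp (by omega) (by omega) h
    · exact absurd (congrArg p.getVert hij) h.ne
    · by_contra hne
      exact p.not_adj_getVert_of_length_eq_dist hp (by omega) (by omega) h.symm
  · rintro (h | h)
    · exact h ▸ p.adj_getVert_succ (by omega)
    · exact (h ▸ p.adj_getVert_succ (by omega)).symm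

end Walk

lemma Reachable.dist_add_one_lt {t : ℕ} (h : G.Reachable u v) (hP : ¬ pathGraph t ⊴ G) :
    G.dist u v + 1 < t := by
  obtain ⟨p, hp⟩ := h.exists_walk_length_eq_dist
  by_contra! ht
  exact hP <| (pathGraph_isIndContained_pathGraph ht).trans
    (hp ▸ p.pathGraph_isIndContained_of_length_eq_dist hp)

lemma Walk.exists_walk_of_induce {S : Set V} {a b : S} (q : (G.induce S).Walk a b) :
    ∃ p : G.Walk a b, (∀ z ∈ p.support, z ∈ S) ∧ p.length = q.length := by
  let p : G.Walk a b := q.map (Embedding.induce S).toHom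
  have hsupp : p.support = q.support.map Subtype.val := support_map _ _
  refine ⟨p, fun z hz => ?_, length_map _ _⟩
  obtain ⟨z, -, rfl⟩ := List.mem_map.1 (hsupp ▸ hz)
  exact z.2

lemma Connected.exists_walk_of_induce {S : Set V} (hS : (G.induce S).Connected) {a b : V}
    (ha : a ∈ S) (hb : b ∈ S) : ∃ p : G.Walk a b, ∀ z ∈ p.support, z ∈ S :=
  let ⟨q⟩ := hS.preconnected ⟨a, ha⟩ ⟨b, hb⟩
  let ⟨p, hp, _⟩ := q.exists_walk_of_induce
  ⟨p, hp⟩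

lemma Walk.exists_walk_length_add_one_lt {t : ℕ} {S : Set V} (p : G.Walk u v)
    (hp : ∀ z ∈ p.support, z ∈ S) (hP : ¬ pathGraph t ⊴ G) :
    ∃ q : G.Walk u v, (∀ z ∈ q.support, z ∈ S) ∧ q.length + 1 < t := by
  obtain ⟨q, hq⟩ := (p.induce S hp).reachable.exists_walk_length_eq_dist
  obtain ⟨q', hq'S, hlen⟩ := q.exists_walk_of_induce
  refine ⟨q', hq'S, ?_⟩
  rw [hlen, hq]
  exact (p.induce S hp).reachable.dist_add_one_lt fun h => hP (h.trans ⟨Embedding.induce S⟩)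

variable {ι : Type*} {T : SimpleGraph ι}

lemma Walk.dist_add_dist_le_length {a b x : V} (p : G.Walk a b) (hx : x ∈ p.support) :
    G.dist a x + G.dist x b ≤ p.length := by
  classical
  have := congrArg length (p.take_spec hx)
  rw [length_append] at this
  have := G.dist_le (p.takeUntil x hx)
  have := G.dist_le (p.dropUntil x hx)
  omega

lemma IsTree.mem_support_of_dist_add_dist_eq (hT : T.IsTree) {a b x : ι} (p : T.Walk a b)
    (h : T.dist a x + T.dist x b = T.dist a b) : x ∈ p.support := by
  classical
  obtain ⟨q₁, hq₁⟩ := hT.connected.exists_walk_length_eq_dist a x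
  obtain ⟨q₂, hq₂⟩ := hT.connected.exists_walk_length_eq_dist x b
  have hq : (q₁.append q₂).IsPath :=
    (q₁.append q₂).isPath_of_length_eq_dist (by rw [Walk.length_append]; omega)
  have heq : q₁.append q₂ = p.bypass :=
    (hT.existsUnique_path a b).unique hq p.bypass_isPath
  exact p.support_bypass_subset_support
    (heq ▸ (Walk.mem_support_append_iff _ _).2 (Or.inl q₁.end_mem_support))

/-- `a` lies on the path from the root `r` to `b`: it is `b` or an ancestor of `b`. -/
def IsAncestor (T : SimpleGraph ι) (r a b : ι) : Prop :=
  T.dist r b = T.dist r a + T.dist a b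

variable {r a b c : ι}

lemma isAncestor_refl (T : SimpleGraph ι) (r a : ι) : T.IsAncestor r a a := by
  simp [IsAncestor]

lemma IsAncestor.trans (hT : T.Connected) (hab : T.IsAncestor r a b)
    (hbc : T.IsAncestor r b c) : T.IsAncestor r a c := by
  have := hT.dist_triangle (u := a) (v := b) (w := c)
  have := hT.dist_triangle (u := r) (v := a) (w := c)
  unfold IsAncestor at *
  omega

lemma IsAncestor.isAncestor_of_dist_le (hT : T.IsTree) (ha : T.IsAncestor r a c)
    (hb : T.IsAncestor r b c) (hd : T.dist r a ≤ T.dist r b) : T.IsAncestor r a b := by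
  obtain ⟨q₁, hq₁⟩ := hT.connected.exists_walk_length_eq_dist r a
  obtain ⟨q₂, hq₂⟩ := hT.connected.exists_walk_length_eq_dist a c
  have hmem := hT.mem_support_of_dist_add_dist_eq (x := b) (q₁.append q₂) hb.symm
  have := hT.connected.dist_triangle (u := r) (v := a) (w := b)
  have := T.dist_comm (u := a) (v := b)
  unfold IsAncestor at *
  rcases (Walk.mem_support_append_iff _ _).1 hmem with hb' | hb'
  · have := q₁.dist_add_dist_le_length hb'
    omega
  · have := q₂.dist_add_dist_le_length hb'
    omega

lemma IsTree.isAncestor_or_isAncestor_of_adj (hT : T.IsTree) (r : ι) (h : T.Adj a b) :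
    T.IsAncestor r a b ∨ T.IsAncestor r b a := by
  have := dist_eq_one_iff_adj.2 h
  have := dist_eq_one_iff_adj.2 h.symm
  unfold IsAncestor
  have := hT.dist_eq_dist_add_one_of_adj r h
  omega

lemma IsTree.isAncestor_of_forall_dist_le (hT : T.IsTree) {S : Set ι}
    (hS : (T.induce S).Connected) {m : ι} (hm : m ∈ S) (hmin : ∀ i ∈ S, T.dist r m ≤ T.dist r i)
    {i : ι} (hi : i ∈ S) : T.IsAncestor r m i := by
  obtain ⟨p, hp⟩ := hS.exists_walk_of_induce hm hi
  suffices ∀ {a c : ι} (p : T.Walk a c), (∀ z ∈ p.support, z ∈ S) → T.IsAncestor r m a →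
      T.IsAncestor r m c from this p hp (isAncestor_refl T r m)
  intro a c p
  induction p with
  | nil => exact fun _ h => h
  | @cons a b _ hab p ih =>
    intro hp hma
    refine ih (fun z hz => hp z (List.mem_cons_of_mem _ hz)) ?_
    rcases hT.isAncestor_or_isAncestor_of_adj r hab with h | h
    · exact hma.trans hT.connected h
    · exact hma.isAncestor_of_dist_le hT h (hmin b (hp b (by simp)))

lemma IsTree.mem_of_isAncestor (hT : T.IsTree) {S : Set ι} (hS : (T.induce S).Connected)
    (ha : a ∈ S) (hc : c ∈ S) (hab : T.IsAncestor r a b) (hbc : T.IsAncestor r b c) : b ∈ S := by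
  obtain ⟨p, hp⟩ := hS.exists_walk_of_induce ha hc
  refine hp b (hT.mem_support_of_dist_add_dist_eq p ?_)
  have := hab.trans hT.connected hbc
  unfold IsAncestor at *
  omega

section ReachUnderOrder

variable {V : Type*} [LinearOrder V] (G : SimpleGraph V) {u v w x : V}

def WeakReach (v u : V) : Prop :=
  ∃ p : G.Walk v u, ∀ z ∈ p.support, u ≤ z

/-- Unlike in the definition of strong coloring numbers, `u < v` is not required here. -/
def StrongReach (v u : V) : Prop :=
  ∃ p : G.Walk v u, ∀ z ∈ p.support.dropLast, v ≤ z

variable {G}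

lemma weakReach_refl (v : V) : G.WeakReach v v :=
  ⟨.nil, by simp⟩

lemma WeakReach.le (h : G.WeakReach v u) : u ≤ v :=
  let ⟨p, hp⟩ := h
  hp v p.start_mem_support

lemma WeakReach.of_adj (h : G.Adj v u) (hle : u ≤ v) : G.WeakReach v u :=
  ⟨.cons h .nil, by simp [hle]⟩

lemma WeakReach.walk_append (p : G.Walk w v) (hp : ∀ z ∈ p.support, u ≤ z)
    (h : G.WeakReach v u) : G.WeakReach w u := by
  obtain ⟨q, hq⟩ := h
  refine ⟨p.append q, fun z hz => ?_⟩
  rcases (Walk.mem_support_append_iff _ _).1 hz with hz | hz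
  exacts [hp z hz, hq z hz]

lemma WeakReach.trans (h₁ : G.WeakReach w v) (h₂ : G.WeakReach v u) : G.WeakReach w u :=
  let ⟨p, hp⟩ := h₁
  h₂.walk_append p fun z hz => h₂.le.trans (hp z hz)

lemma WeakReach.of_le (h₁ : G.WeakReach v u) (h₂ : G.WeakReach v x) (hux : u ≤ x) :
    G.WeakReach x u :=
  let ⟨p, hp⟩ := h₂
  h₁.walk_append p.reverse fun z hz => hux.trans (hp z (by simpa using hz))

open scoped Classical in
/-- `td ≤ wcol_∞`: weak reachability is the ancestor relation of an elimination forest. -/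
theorem treedepthLE_of_card_weakReach_le {V : Type} [Fintype V] [LinearOrder V]
    {G : SimpleGraph V} {k : ℕ} (h : ∀ v, #{u | G.WeakReach v u} ≤ k) : TreedepthLE G k := by
  refine ⟨fun u v => G.WeakReach v u, weakReach_refl, fun u v huv hvu => le_antisymm huv.le hvu.le,
    fun u v w huv hvw => hvw.trans huv, fun u v huv => ?_, fun v u w hu hw => ?_, h⟩
  · rcases le_total u v with hle | hle
    · exact Or.inl (.of_adj huv.symm hle)
    · exact Or.inr (.of_adj huv hle)
  · rcases le_total u w with hle | hle
    · exact Or.inl (hu.of_le hw hle)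
    · exact Or.inr (hw.of_le hu hle)

variable {F : V → Finset V}

/-- The walk is scanned from `v`, keeping track of the least vertex `x` seen so far: each new
minimum is strongly reachable from the previous one. -/
lemma mem_iterate_biUnion_of_walk (hF : ∀ x, x ∈ F x)
    (hstrong : ∀ x y, y < x → G.StrongReach x y → y ∈ F x)
    (p : G.Walk v u) (hp : ∀ z ∈ p.support, u ≤ z) : u ∈ (Finset.biUnion · F)^[p.length] {v} := by
  suffices ∀ {a y : V} (p : G.Walk a y), (∀ z ∈ p.support, y ≤ z) → ∀ {x : V} {k : ℕ},
      x ∈ (Finset.biUnion · F)^[k] {v} → y ≤ x → (∃ q : G.Walk x a, ∀ z ∈ q.support, x ≤ z) →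
      y ∈ (Finset.biUnion · F)^[k + p.length] {v} by
    simpa using this p hp (k := 0) (by simp) (hp v p.start_mem_support) ⟨.nil, by simp⟩
  intro a y p
  induction p with
  | nil => exact fun _ x k hx hyx ⟨q, hq⟩ => le_antisymm hyx (hq _ q.end_mem_support) ▸ hx
  | @cons a b _ hab p ih =>
    rintro hp x k hx hyx ⟨q, hq⟩
    have hqb : ∀ z ∈ (q.concat hab).support.dropLast, x ≤ z := by
      simpa [Walk.support_concat] using hq
    rw [Walk.length_cons, add_comm p.length, ← add_assoc]
    have hp' : ∀ z ∈ p.support, _ ≤ z := fun z hz => hp z (List.mem_cons_of_mem _ hz)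
    rcases lt_or_ge b x with hbx | hxb
    · have hb : b ∈ (Finset.biUnion · F)^[k + 1] {v} := by
        rw [Function.iterate_succ_apply']
        exact mem_biUnion.2 ⟨x, hx, hstrong x b hbx ⟨_, hqb⟩⟩
      exact ih hp' hb (hp' b p.start_mem_support) ⟨.nil, by simp⟩
    · refine ih hp' (iterate_biUnion_subset_iterate_biUnion hF (k.le_add_right 1) _ hx) hyx
        ⟨q.concat hab, fun z hz => ?_⟩
      rcases List.mem_append.1 (Walk.support_concat q hab ▸ hz) with hz | hz
      · exact hq z hz
      · exact (List.mem_singleton.1 hz) ▸ hxb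

theorem WeakReach.mem_iterate_biUnion (hF : ∀ x, x ∈ F x)
    (hstrong : ∀ x y, y < x → G.StrongReach x y → y ∈ F x) {t : ℕ} (hP : ¬ pathGraph t ⊴ G)
    (h : G.WeakReach v u) : u ∈ (Finset.biUnion · F)^[t - 2] {v} := by
  obtain ⟨p, hp⟩ := h
  obtain ⟨q, hq, hlen⟩ := p.exists_walk_length_add_one_lt (S := {z | u ≤ z}) hp hP
  exact iterate_biUnion_subset_iterate_biUnion hF (by omega) _
    (mem_iterate_biUnion_of_walk hF hstrong q hq)

end ReachUnderOrder

end SimpleGraph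

structure TreeDecomposition {V : Type*} (G : SimpleGraph V) (ι : Type*) where
  tree : SimpleGraph ι
  bag : ι → Finset V
  isTree : tree.IsTree
  exists_mem_bag (v : V) : ∃ i, v ∈ bag i
  exists_mem_bag_of_adj {u v : V} : G.Adj u v → ∃ i, u ∈ bag i ∧ v ∈ bag i
  connected_bags (v : V) : (tree.induce {i | v ∈ bag i}).Connected

namespace TreeDecomposition

open SimpleGraph

variable {V ι : Type*} {G : SimpleGraph V} (D : TreeDecomposition G ι) (r : ι)

noncomputable def top (v : V) : ι :=
  Function.argminOn (D.tree.dist r) {i | v ∈ D.bag i} (D.exists_mem_bag v)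

variable {r}

lemma mem_bag_top (v : V) : v ∈ D.bag (D.top r v) :=
  Function.argminOn_mem (D.tree.dist r) {i | v ∈ D.bag i} _

lemma dist_top_le {v : V} {i : ι} (h : v ∈ D.bag i) : D.tree.dist r (D.top r v) ≤ D.tree.dist r i :=
  Function.argminOn_le (D.tree.dist r) {j | v ∈ D.bag j} h

lemma isAncestor_top {v : V} {i : ι} (h : v ∈ D.bag i) : D.tree.IsAncestor r (D.top r v) i :=
  D.isTree.isAncestor_of_forall_dist_le (D.connected_bags v) (D.mem_bag_top v)
    (fun _ hj => D.dist_top_le hj) h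

lemma isAncestor_of_mem_bag {X b i : ι} {z : V} (hb : z ∈ D.bag b) (hXb : D.tree.IsAncestor r X b)
    (hd : D.tree.dist r X ≤ D.tree.dist r (D.top r z)) (hi : z ∈ D.bag i) :
    D.tree.IsAncestor r X i :=
  (hXb.isAncestor_of_dist_le D.isTree (D.isAncestor_top hb) hd).trans D.isTree.connected
    (D.isAncestor_top hi)

lemma mem_bag_of_isAncestor {X b : ι} {z : V} (hb : z ∈ D.bag b) (hXb : D.tree.IsAncestor r X b)
    (hd : D.tree.dist r (D.top r z) ≤ D.tree.dist r X) : z ∈ D.bag X :=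
  D.isTree.mem_of_isAncestor (D.connected_bags z) (D.mem_bag_top z) hb
    ((D.isAncestor_top hb).isAncestor_of_dist_le D.isTree hXb hd) hXb

/-- The bags of all but the last vertex of `p` lie below `top v`; the bag shared by the last edge
then puts `top v` between `top x` and a bag of `x`. -/
theorem mem_bag_top_of_walk {v x : V} (p : G.Walk v x)
    (hp : ∀ z ∈ p.support.dropLast, D.tree.dist r (D.top r v) ≤ D.tree.dist r (D.top r z))
    (hx : D.tree.dist r (D.top r x) ≤ D.tree.dist r (D.top r v)) :
    x ∈ D.bag (D.top r v) := by
  set X := D.top r v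
  suffices ∀ {z y : V} (q : G.Walk z y), D.tree.dist r (D.top r y) ≤ D.tree.dist r X →
      (∃ b, z ∈ D.bag b ∧ D.tree.IsAncestor r X b) →
      (∀ y ∈ q.support.dropLast, D.tree.dist r X ≤ D.tree.dist r (D.top r y)) → y ∈ D.bag X from
    this p hx ⟨X, D.mem_bag_top v, isAncestor_refl _ _ _⟩ hp
  intro z y q hy
  induction q with
  | nil => exact fun ⟨b, hb, hXb⟩ _ => D.mem_bag_of_isAncestor hb hXb hy
  | @cons z z' _ hzz' q ih =>
    rintro ⟨b, hb, hXb⟩ hq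
    rw [Walk.support_cons, List.dropLast_cons_of_ne_nil q.support_ne_nil] at hq
    obtain ⟨b', hzb', hz'b'⟩ := D.exists_mem_bag_of_adj hzz'
    exact ih hy ⟨b', hz'b', D.isAncestor_of_mem_bag hb hXb (hq z (by simp)) hzb'⟩
      (fun y hy => hq y (List.mem_cons_of_mem _ hy))

end TreeDecomposition

lemma exists_linearOrder_monotone {V α : Type*} [Finite V] [LinearOrder α] (f : V → α) :
    ∃ _ : LinearOrder V, Monotone f := by
  obtain ⟨n, ⟨e⟩⟩ := Finite.exists_equiv_fin V
  have hinj : Function.Injective fun v => toLex (f v, e v) :=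
    fun u v h => e.injective (congrArg (fun p => (ofLex p).2) h)
  let _ : LinearOrder V := LinearOrder.lift' _ hinj
  refine ⟨‹_›, fun u v huv => ?_⟩
  rcases Prod.Lex.le_iff.1 huv with h | ⟨h, -⟩
  exacts [h.le, h.le]

lemma TreewidthLE.exists_treeDecomposition {V : Type} {G : SimpleGraph V} {w : ℕ}
    (h : TreewidthLE G w) : ∃ (ι : Type) (D : TreeDecomposition G ι), ∀ i, #(D.bag i) ≤ w + 1 :=
  let ⟨ι, T, bag, hT, hcov, hedge, hconn, hcard⟩ := h
  ⟨ι, ⟨T, bag, hT, hcov, hedge _ _, hconn⟩, hcard⟩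

theorem stmt18_general {V : Type} [Fintype V] (G : SimpleGraph V) (t : ℕ)
    (hPt : ¬ HasInducedCopy (SimpleGraph.pathGraph t) G)
    (w : ℕ) (hw : TreewidthLE G w) :
    TreedepthLE G ((w + 1) ^ (t - 1)) := by
  classical
  obtain ⟨ι, D, hD⟩ := hw.exists_treeDecomposition
  obtain ⟨r⟩ := D.isTree.connected.nonempty
  obtain ⟨_, hmono⟩ := exists_linearOrder_monotone fun v => D.tree.dist r (D.top r v)
  have hstrong : ∀ x y, y < x → G.StrongReach x y → y ∈ D.bag (D.top r x) :=
    fun x y hyx ⟨p, hp⟩ => D.mem_bag_top_of_walk p (fun z hz => hmono (hp z hz)) (hmono hyx.le)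
  refine treedepthLE_of_card_weakReach_le fun v => ?_
  calc #{u | G.WeakReach v u}
      ≤ #((Finset.biUnion · fun x => D.bag (D.top r x))^[t - 2] {v}) :=
        card_le_card fun u hu => (mem_filter.1 hu).2.mem_iterate_biUnion D.mem_bag_top hstrong
          (hasInducedCopy_iff_isIndContained.not.1 hPt)
    _ ≤ (w + 1) ^ (t - 2) := by simpa using card_iterate_biUnion_le (fun x => hD _) {v} (t - 2)
    _ ≤ (w + 1) ^ (t - 1) := Nat.pow_le_pow_right w.succ_pos (by omega)

theorem stmt18 {V : Type} [Fintype V] (G : SimpleGraph V) (t : ℕ) (ht : 2 ≤ t)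
    (hPt : ¬ HasInducedCopy (SimpleGraph.pathGraph t) G)
    (w : ℕ) (hw : TreewidthLE G w) :
    TreedepthLE G ((w + 1) ^ (t - 1)) :=
  stmt18_general G t hPt w hw
end

section
/- (Kierstead–Yang) For every graph G and every positive integer r, the weak r-coloring number satisfies wcol_r(G) ≤ scol_r(G)^r, where scol_r is the strong r-coloring number. -/
/-!
Fix the order witnessing the strong bound. Let `u` be weakly `r`-reachable from `v` along a path
`P`. If `u ≠ v`, the first vertex `x` of `P` below `v` is strongly reachable from `v` along the
initial segment, and `u` is weakly reachable from `x` along the rest of `P`, which is strictly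
shorter. So `u` is reached from `v` by at most `r` strong-reachability steps, and there are at
most `k ^ r` such chains.
-/

/-- With respect to a linear order `le` on the vertices, `u` is strongly
`r`-reachable from `v`: `u = v`, or `u ⪯ v` and there is a `v`–`u` path of
length at most `r` all of whose internal vertices `w` satisfy `v ⪯ w`. -/
def StrongReach {V : Type*} (G : SimpleGraph V) (le : V → V → Prop) (r : ℕ)
    (u v : V) : Prop :=
  u = v ∨ (le u v ∧ ∃ p : G.Walk v u, p.IsPath ∧ p.length ≤ r ∧
    ∀ w ∈ p.support, w ≠ u → w ≠ v → le v w)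

/-- With respect to a linear order `le` on the vertices, `u` is weakly
`r`-reachable from `v`: `u = v`, or `u ⪯ v` and there is a `v`–`u` path of
length at most `r` all of whose internal vertices `w` satisfy `u ⪯ w`. -/
def WeakReach {V : Type*} (G : SimpleGraph V) (le : V → V → Prop) (r : ℕ)
    (u v : V) : Prop :=
  u = v ∨ (le u v ∧ ∃ p : G.Walk v u, p.IsPath ∧ p.length ≤ r ∧
    ∀ w ∈ p.support, w ≠ u → w ≠ v → le u w)

open Finset

namespace SimpleGraph.Walk

variable {V : Type*} {G : SimpleGraph V}

theorem exists_append_eq_first (Q : V → Prop) {v u : V} (p : G.Walk v u) (hv : ¬ Q v)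
    (hu : Q u) : ∃ x, ∃ (p₁ : G.Walk v x) (p₂ : G.Walk x u),
      p₁.append p₂ = p ∧ Q x ∧ ∀ w ∈ p₁.support, w ≠ x → ¬ Q w := by
  induction p with
  | nil => exact absurd hu hv
  | @cons a b c hab q ih =>
    by_cases hb : Q b
    · refine ⟨b, cons hab nil, q, rfl, hb, ?_⟩
      simp only [support_cons, support_nil, List.mem_cons, List.not_mem_nil, or_false]
      rintro w (rfl | rfl) hw
      exacts [hv, absurd rfl hw]
    · obtain ⟨x, q₁, q₂, rfl, hx, hfirst⟩ := ih hb hu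
      refine ⟨x, cons hab q₁, q₂, rfl, hx, ?_⟩
      simp only [support_cons, List.mem_cons]
      rintro w (rfl | hw) hwx
      exacts [hv, hfirst w hw hwx]

end SimpleGraph.Walk

section IterBiUnion

variable {V : Type*} [DecidableEq V]

def iterBiUnion (f : V → Finset V) : ℕ → V → Finset V
  | 0, v => {v}
  | n + 1, v => (f v).biUnion (iterBiUnion f n)

theorem self_mem_iterBiUnion {f : V → Finset V} (hf : ∀ v, v ∈ f v) (n : ℕ) (v : V) :
    v ∈ iterBiUnion f n v := by
  induction n generalizing v with
  | zero => exact mem_singleton_self v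
  | succ n ih => exact mem_biUnion.2 ⟨v, hf v, ih v⟩

theorem card_iterBiUnion_le {f : V → Finset V} {k : ℕ} (hk : ∀ v, #(f v) ≤ k) (n : ℕ)
    (v : V) : #(iterBiUnion f n v) ≤ k ^ n := by
  induction n generalizing v with
  | zero => simp [iterBiUnion]
  | succ n ih =>
    calc #(iterBiUnion f (n + 1) v) ≤ ∑ x ∈ f v, #(iterBiUnion f n x) := card_biUnion_le
      _ ≤ #(f v) * k ^ n := by simpa using sum_le_sum fun x _ => ih x
      _ ≤ k ^ (n + 1) := by rw [pow_succ']; exact Nat.mul_le_mul_right _ (hk v)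

end IterBiUnion

section Reachability

variable {V : Type*} [DecidableEq V] {G : SimpleGraph V} {le : V → V → Prop}
  [IsLinearOrder V le] {r : ℕ} {f : V → Finset V}

theorem mem_iterBiUnion_of_isPath (hf : ∀ u v, StrongReach G le r u v → u ∈ f v) {n : ℕ}
    (hnr : n ≤ r) {v u : V} (p : G.Walk v u) (hp : p.IsPath) (hlen : p.length ≤ n)
    (hmin : ∀ w ∈ p.support, le u w) : u ∈ iterBiUnion f n v := by
  have hself : ∀ v, v ∈ f v := fun v => hf v v (Or.inl rfl)
  induction n generalizing v with
  | zero => rw [p.eq_of_length_eq_zero (Nat.le_zero.1 hlen)]; exact mem_singleton_self u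
  | succ n ih =>
    by_cases huv : u = v
    · exact huv ▸ self_mem_iterBiUnion hself _ u
    have hvu : ¬ le v u := fun h => huv (antisymm (hmin v p.start_mem_support) h)
    obtain ⟨x, p₁, p₂, rfl, hx, hfirst⟩ :=
      p.exists_append_eq_first (fun w => ¬ le v w) (not_not.2 (refl_of le v)) hvu
    rw [SimpleGraph.Walk.length_append] at hlen
    have hp₁ : 1 ≤ p₁.length := Nat.one_le_iff_ne_zero.2 fun h =>
      hx (p₁.eq_of_length_eq_zero h ▸ refl_of le v)
    have hxv : x ∈ f v := hf x v <| Or.inr ⟨(total_of le v x).resolve_left hx, p₁,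
      hp.of_append_left, by omega, fun w hw hwx _ => not_not.1 (hfirst w hw hwx)⟩
    have hu : u ∈ iterBiUnion f n x := ih (by omega) p₂ hp.of_append_right (by omega)
      fun w hw => hmin w ((p₁.mem_support_append_iff p₂).2 (Or.inr hw))
    exact mem_biUnion.2 ⟨x, hxv, hu⟩

theorem mem_iterBiUnion_of_weakReach (hf : ∀ u v, StrongReach G le r u v → u ∈ f v)
    {u v : V} (h : WeakReach G le r u v) : u ∈ iterBiUnion f r v := by
  rcases h with rfl | ⟨huv, p, hp, hlen, hint⟩
  · exact self_mem_iterBiUnion (fun v => hf v v (Or.inl rfl)) r u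
  refine mem_iterBiUnion_of_isPath hf le_rfl p hp hlen fun w hw => ?_
  by_cases hwu : w = u
  · exact hwu ▸ refl_of le u
  by_cases hwv : w = v
  · exact hwv ▸ huv
  exact hint w hw hwu hwv

end Reachability

open scoped Classical in
theorem stmt19_general {V : Type*} [Fintype V] (G : SimpleGraph V) (r : ℕ)
    (k : ℕ)
    (h : ∃ le : V → V → Prop, IsLinearOrder V le ∧
      ∀ v : V, (Finset.univ.filter (fun u => StrongReach G le r u v)).card ≤ k) :
    ∃ le : V → V → Prop, IsLinearOrder V le ∧
      ∀ v : V, (Finset.univ.filter (fun u => WeakReach G le r u v)).card ≤ k ^ r := by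
  obtain ⟨le, hle, hcard⟩ := h
  refine ⟨le, hle, fun v => ?_⟩
  let f : V → Finset V := fun v => univ.filter fun u => StrongReach G le r u v
  have hf : ∀ u v, StrongReach G le r u v → u ∈ f v := fun u v h => mem_filter.2 ⟨mem_univ u, h⟩
  calc #(univ.filter fun u => WeakReach G le r u v) ≤ #(iterBiUnion f r v) :=
        card_le_card fun u hu => mem_iterBiUnion_of_weakReach hf (mem_filter.1 hu).2
    _ ≤ k ^ r := card_iterBiUnion_le hcard r v

open scoped Classical in
/-- Kierstead–Yang: `wcol_r(G) ≤ scol_r(G)^r`.  If some linear order witnesses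
that every vertex strongly `r`-reaches at most `k` vertices, then some linear
order witnesses that every vertex weakly `r`-reaches at most `k^r` vertices. -/
theorem stmt19 {V : Type*} [Fintype V] (G : SimpleGraph V) (r : ℕ) (hr : 1 ≤ r)
    (k : ℕ)
    (h : ∃ le : V → V → Prop, IsLinearOrder V le ∧
      ∀ v : V, (Finset.univ.filter (fun u => StrongReach G le r u v)).card ≤ k) :
    ∃ le : V → V → Prop, IsLinearOrder V le ∧
      ∀ v : V, (Finset.univ.filter (fun u => WeakReach G le r u v)).card ≤ k ^ r :=
  stmt19_general G r k h
end
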